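/- Fix N : ℕ and 1 ≤ n ≤ 2^N. On G = (Fin N → ZMod 2) define Walsh functions w_k(x) = (−1)^{∑_{i<N} b_i(k)·(x i).val} (for k < 2^N), Dirichlet kernels D_j(x) = ∑_{k=0}^{j−1} w_k(x), and the Fejér kernel K_n(x) := (1/n)·∑_{j=0}^{n−1} D_j(x). Then (1/2^N)·∑_{x ∈ G} |K_n(x)| ≤ 2. -/

import Mathlib

/-!
Put `S n = n K_n = ∑_{j<n} D_j`. Since `2 ^ m + j = 2 ^ m ^^^ j` for `j < 2 ^ m` and Walsh functions
are multiplicative under xor, `S (2 ^ m + k) = S (2 ^ m) + k D (2 ^ m) + w (2 ^ m) S k` for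
`k ≤ 2 ^ m`. The kernels `D (2 ^ m)` and `S (2 ^ m)` are nonnegative, and orthogonality of the Walsh
functions gives them the averages `1` and `2 ^ m - 1`. Splitting off the leading binary digit of `n`,
the average of `|S n|` is therefore at most `(2 ^ m - 1) + k + 2k ≤ 2n` by induction on `n`.
-/

open Finset

def walsh (N k : ℕ) (x : Fin N → ZMod 2) : ℤ :=
  (-1) ^ ∑ i : Fin N, (if k.testBit i then 1 else 0) * (x i).val

def walshDirichlet (N j : ℕ) (x : Fin N → ZMod 2) : ℤ := ∑ k ∈ range j, walsh N k x

/-- `n` times the Walsh–Fejér kernel `K n`. -/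
def walshDirichletSum (N n : ℕ) (x : Fin N → ZMod 2) : ℤ := ∑ j ∈ range n, walshDirichlet N j x

theorem Nat.two_pow_add_eq_xor_of_lt {j m : ℕ} (hj : j < 2 ^ m) : 2 ^ m + j = 2 ^ m ^^^ j := by
  have h := Nat.two_pow_add_eq_or_of_lt hj 1
  rw [mul_one] at h
  rw [h]
  refine Nat.eq_of_testBit_eq fun i => ?_
  simp only [Nat.testBit_or, Nat.testBit_xor, Nat.testBit_two_pow]
  rcases eq_or_ne m i with rfl | hmi
  · simp [Nat.testBit_lt_two_pow hj]
  · simp [hmi]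

section
variable {N : ℕ}

theorem walsh_eq_prod (k : ℕ) (x : Fin N → ZMod 2) :
    walsh N k x = ∏ i : Fin N, (-1) ^ ((if k.testBit i then 1 else 0) * (x i).val) :=
  (prod_pow_eq_pow_sum _ _ _).symm

@[simp] theorem walsh_zero (x : Fin N → ZMod 2) : walsh N 0 x = 1 := by simp [walsh]

theorem abs_walsh (k : ℕ) (x : Fin N → ZMod 2) : |walsh N k x| = 1 := abs_neg_one_pow _

theorem walsh_xor (a b : ℕ) (x : Fin N → ZMod 2) :
    walsh N (a ^^^ b) x = walsh N a x * walsh N b x := by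
  simp only [walsh_eq_prod, ← prod_mul_distrib, Nat.testBit_xor]
  refine prod_congr rfl fun i _ => ?_
  cases a.testBit i <;> cases b.testBit i <;> simp [← mul_pow]

theorem sum_walsh (k : ℕ) : ∑ x, walsh N k x = ∏ i : Fin N, if k.testBit i then 0 else 2 := by
  simp only [walsh_eq_prod]
  rw [← Fintype.prod_sum fun (i : Fin N) (a : ZMod 2) =>
    (-1 : ℤ) ^ ((if k.testBit i then 1 else 0) * a.val)]
  refine prod_congr rfl fun i _ => ?_
  cases k.testBit i
  · simp
  · simpa using (by decide : ∑ a : ZMod 2, (-1 : ℤ) ^ a.val = 0)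

theorem sum_walsh_eq_zero {k : ℕ} (hk0 : k ≠ 0) (hk : k < 2 ^ N) : ∑ x, walsh N k x = 0 := by
  obtain ⟨i, hi⟩ := Nat.exists_testBit_of_ne_zero hk0
  have hiN : i < N := by
    by_contra! hNi
    simp [Nat.testBit_lt_two_pow (hk.trans_le (Nat.pow_le_pow_right two_pos hNi))] at hi
  rw [sum_walsh]
  exact prod_eq_zero (mem_univ ⟨i, hiN⟩) (by simp [hi])

theorem sum_walshDirichlet {j : ℕ} (hj0 : j ≠ 0) (hj : j ≤ 2 ^ N) :
    ∑ x, walshDirichlet N j x = 2 ^ N := by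
  obtain ⟨j, rfl⟩ := Nat.exists_eq_succ_of_ne_zero hj0
  simp only [walshDirichlet]
  rw [sum_comm, sum_range_succ']
  have hvanish : ∀ k ∈ range j, ∑ x, walsh N (k + 1) x = 0 := fun k hk =>
    sum_walsh_eq_zero k.succ_ne_zero (by simp at hk; omega)
  simp [sum_eq_zero hvanish]

theorem sum_walshDirichletSum {n : ℕ} (hn0 : n ≠ 0) (hn : n ≤ 2 ^ N) :
    ∑ x, walshDirichletSum N n x = (n - 1 : ℤ) * 2 ^ N := by
  obtain ⟨n, rfl⟩ := Nat.exists_eq_succ_of_ne_zero hn0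
  simp only [walshDirichletSum]
  rw [sum_comm, sum_range_succ']
  have hconst : ∀ j ∈ range n, ∑ x, walshDirichlet N (j + 1) x = 2 ^ N := fun j hj =>
    sum_walshDirichlet j.succ_ne_zero (by simp at hj; omega)
  rw [sum_congr rfl hconst]
  simp [walshDirichlet]

theorem walshDirichlet_two_pow_add {m j : ℕ} (hj : j ≤ 2 ^ m) (x : Fin N → ZMod 2) :
    walshDirichlet N (2 ^ m + j) x =
      walshDirichlet N (2 ^ m) x + walsh N (2 ^ m) x * walshDirichlet N j x := by
  simp only [walshDirichlet]
  rw [sum_range_add, mul_sum]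
  congr 1
  refine sum_congr rfl fun k hk => ?_
  rw [Nat.two_pow_add_eq_xor_of_lt ((mem_range.1 hk).trans_le hj), walsh_xor]

theorem walshDirichletSum_two_pow_add {m k : ℕ} (hk : k ≤ 2 ^ m) (x : Fin N → ZMod 2) :
    walshDirichletSum N (2 ^ m + k) x = walshDirichletSum N (2 ^ m) x +
      k * walshDirichlet N (2 ^ m) x + walsh N (2 ^ m) x * walshDirichletSum N k x := by
  simp only [walshDirichletSum]
  rw [sum_range_add, mul_sum,
    sum_congr rfl fun j hj => walshDirichlet_two_pow_add ((mem_range.1 hj).le.trans hk) x,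
    sum_add_distrib, sum_const, card_range, nsmul_eq_mul, add_assoc]

theorem walshDirichlet_two_pow_nonneg (m : ℕ) (x : Fin N → ZMod 2) :
    0 ≤ walshDirichlet N (2 ^ m) x := by
  induction m with
  | zero => simp [walshDirichlet]
  | succ m ih =>
    rw [pow_succ, mul_two, walshDirichlet_two_pow_add le_rfl]
    have := (abs_le.1 (abs_walsh (2 ^ m) x).le).1
    nlinarith

theorem walshDirichletSum_two_pow_nonneg (m : ℕ) (x : Fin N → ZMod 2) :
    0 ≤ walshDirichletSum N (2 ^ m) x := by
  induction m with
  | zero => simp [walshDirichletSum, walshDirichlet]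
  | succ m ih =>
    rw [pow_succ, mul_two, walshDirichletSum_two_pow_add le_rfl]
    have := (abs_le.1 (abs_walsh (2 ^ m) x).le).1
    have := walshDirichlet_two_pow_nonneg m x
    nlinarith [pow_nonneg (zero_le_two : (0 : ℤ) ≤ 2) m]

theorem abs_walshDirichletSum_two_pow_add_le {m k : ℕ} (hk : k ≤ 2 ^ m) (x : Fin N → ZMod 2) :
    |walshDirichletSum N (2 ^ m + k) x| ≤ walshDirichletSum N (2 ^ m) x +
      k * walshDirichlet N (2 ^ m) x + |walshDirichletSum N k x| := by
  rw [walshDirichletSum_two_pow_add hk]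
  calc _ ≤ |walshDirichletSum N (2 ^ m) x + k * walshDirichlet N (2 ^ m) x| +
        |walsh N (2 ^ m) x * walshDirichletSum N k x| := abs_add_le _ _
    _ = _ := by
      rw [abs_mul, abs_walsh, one_mul, abs_of_nonneg (add_nonneg
        (walshDirichletSum_two_pow_nonneg m x)
        (mul_nonneg k.cast_nonneg (walshDirichlet_two_pow_nonneg m x)))]

theorem sum_abs_walshDirichletSum_le {n : ℕ} (hn : n ≤ 2 ^ N) :
    ∑ x, |walshDirichletSum N n x| ≤ 2 * n * 2 ^ N := by
  induction n using Nat.strong_induction_on with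
  | _ n ih =>
  rcases eq_or_ne n 0 with rfl | hn0
  · simp [walshDirichletSum]
  obtain ⟨m, hlow, hhigh⟩ : ∃ m, 2 ^ m ≤ n ∧ n < 2 ^ (m + 1) :=
    ⟨Nat.log 2 n, Nat.pow_log_le_self 2 hn0, Nat.lt_pow_succ_log_self one_lt_two n⟩
  obtain ⟨k, rfl⟩ := Nat.exists_eq_add_of_le hlow
  have hkm : k < 2 ^ m := by rw [pow_succ] at hhigh; omega
  have hmN : 2 ^ m ≤ 2 ^ N := by omega
  calc ∑ x, |walshDirichletSum N (2 ^ m + k) x|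
      ≤ ∑ x, (walshDirichletSum N (2 ^ m) x + k * walshDirichlet N (2 ^ m) x +
          |walshDirichletSum N k x|) :=
        sum_le_sum fun x _ => abs_walshDirichletSum_two_pow_add_le hkm.le x
    _ = (2 ^ m - 1) * 2 ^ N + k * 2 ^ N + ∑ x, |walshDirichletSum N k x| := by
      rw [sum_add_distrib, sum_add_distrib, ← mul_sum,
        sum_walshDirichletSum (by positivity) hmN, sum_walshDirichlet (by positivity) hmN]
      push_cast
      ring
    _ ≤ (2 ^ m - 1) * 2 ^ N + k * 2 ^ N + 2 * k * 2 ^ N := by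
      gcongr
      exact ih k (by omega) (by omega)
    _ ≤ 2 * ↑(2 ^ m + k) * 2 ^ N := by
      push_cast
      have : (k : ℤ) ≤ 2 ^ m := by exact_mod_cast hkm.le
      nlinarith [pow_pos (zero_lt_two : (0 : ℤ) < 2) N]

end

theorem walshFejer_L1_norm_le_two_general (N n : ℕ) (hn : n ≤ 2^N) :
    (1 / 2^N : ℝ) * ∑ x : Fin N → ZMod 2,
      |(1/(n : ℝ)) * ∑ j ∈ Finset.range n,
        ((∑ k ∈ Finset.range j,
          (-1 : ℤ) ^ (∑ i : Fin N, (if Nat.testBit k (i : ℕ) then 1 else 0) * (x i).val) : ℤ) : ℝ)|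
      ≤ 2 := by
  have hsum : ∑ x, |(walshDirichletSum N n x : ℝ)| ≤ 2 * n * 2 ^ N := by
    exact_mod_cast sum_abs_walshDirichletSum_le hn
  have hmul : (1 / n : ℝ) * (2 * n * 2 ^ N) ≤ 2 * 2 ^ N := by
    rcases eq_or_ne n 0 with rfl | hn0
    · simp
    · apply le_of_eq
      field_simp
  calc _ = (1 / 2 ^ N : ℝ) * ((1 / n) * ∑ x, |(walshDirichletSum N n x : ℝ)|) := by
        congr 1
        rw [mul_sum]
        refine sum_congr rfl fun x _ => ?_
        rw [abs_mul, abs_of_nonneg (by positivity)]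
        push_cast [walshDirichletSum, walshDirichlet, walsh]
        rfl
    _ ≤ (1 / 2 ^ N : ℝ) * ((1 / n) * (2 * n * 2 ^ N)) := by gcongr
    _ ≤ (1 / 2 ^ N : ℝ) * (2 * 2 ^ N) := by gcongr
    _ = 2 := by field_simp

theorem walshFejer_L1_norm_le_two (N n : ℕ) (hn1 : 1 ≤ n) (hn : n ≤ 2^N) :
    (1 / 2^N : ℝ) * ∑ x : Fin N → ZMod 2,
      |(1/(n : ℝ)) * ∑ j ∈ Finset.range n,
        ((∑ k ∈ Finset.range j,
          (-1 : ℤ) ^ (∑ i : Fin N, (if Nat.testBit k (i : ℕ) then 1 else 0) * (x i).val) : ℤ) : ℝ)|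
      ≤ 2 :=
  walshFejer_L1_norm_le_two_general N n hn
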